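/- The generating function G(t,s,z) for plane trees by old leaves (t), young leaves (s), and edges (z) equals (1 + z - sz - sqrt(1 - 2(1+s)z + (1 - 4t + 2s + s²)z²)) / (2z). -/

import Mathlib

/-- A plane tree: a root together with an ordered (possibly empty) list of subtrees. -/
inductive PlaneTree where
  | node : List PlaneTree → PlaneTree

namespace PlaneTree

/-- The number of edges of a plane tree. -/
def edges : PlaneTree → ℕ
  | node ts => (ts.attach.map (fun t => edges t.1 + 1)).sum
decreasing_by have := List.sizeOf_lt_of_mem t.2; simp at *; omega

/-- Indicator that a tree is a single vertex (i.e. the corresponding child is a leaf). -/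
def isLeafInd : PlaneTree → ℕ
  | node [] => 1
  | node (_ :: _) => 0

/-- The number of old leaves: leaves that are the leftmost child of their parent. -/
def oldLeaves : PlaneTree → ℕ
  | node [] => 0
  | node (t :: ts) =>
      isLeafInd t + oldLeaves t + (ts.attach.map (fun s => oldLeaves s.1)).sum
decreasing_by
  · simp; omega
  · have := List.sizeOf_lt_of_mem s.2; simp at *; omega

/-- The number of young leaves: leaves that are not the leftmost child of their parent. -/
def youngLeaves : PlaneTree → ℕ
  | node [] => 0
  | node (t :: ts) =>
      youngLeaves t + (ts.attach.map (fun s => isLeafInd s.1 + youngLeaves s.1)).sum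
decreasing_by
  · simp; omega
  · have := List.sizeOf_lt_of_mem s.2; simp at *; omega

end PlaneTree

open MvPolynomial

/-- The coefficients of the trivariate generating function `G(t,s,z)` for plane trees. -/
noncomputable def treeGF : PowerSeries (MvPolynomial (Fin 2) ℚ) :=
  PowerSeries.mk fun n =>
    ∑ i ∈ Finset.range (n + 1), ∑ j ∈ Finset.range (n + 1),
      (Nat.card {T : PlaneTree // T.edges = n ∧ T.oldLeaves = i ∧ T.youngLeaves = j} :
          MvPolynomial (Fin 2) ℚ) * X 0 ^ i * X 1 ^ j

/-!
Removing the rightmost child of the root is a bijection between the trees with at least one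
edge and the pairs `(T, d)` of trees; the removed subtree `d` is an old leaf exactly when it is a
leaf and `T` is a single vertex, and a young leaf when it is a leaf and `T` is not. Hence
`G = 1 + z (G - 1 + t) + z (G - 1) (G - 1 + s)`, a quadratic equation in `G` whose discriminant
is the radicand of the closed form.
-/

open Finset

namespace PlaneTree

theorem edges_node (ts : List PlaneTree) :
    (node ts).edges = (ts.map fun c => c.edges + 1).sum := by
  rw [edges, List.attach_map_val (l := ts) (f := fun c => c.edges + 1)]

@[simp]
theorem oldLeaves_node_nil : (node []).oldLeaves = 0 := by
  rw [oldLeaves]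

@[simp]
theorem youngLeaves_node_nil : (node []).youngLeaves = 0 := by
  rw [youngLeaves]

theorem oldLeaves_node_cons (c : PlaneTree) (ts : List PlaneTree) :
    (node (c :: ts)).oldLeaves = c.isLeafInd + c.oldLeaves + (ts.map oldLeaves).sum := by
  rw [oldLeaves, List.attach_map_val (l := ts) (f := oldLeaves)]

theorem youngLeaves_node_cons (c : PlaneTree) (ts : List PlaneTree) :
    (node (c :: ts)).youngLeaves =
      c.youngLeaves + (ts.map fun s => s.isLeafInd + s.youngLeaves).sum := by
  rw [youngLeaves, List.attach_map_val (l := ts) (f := fun s => s.isLeafInd + s.youngLeaves)]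

theorem edges_eq_zero_iff {T : PlaneTree} : T.edges = 0 ↔ T = node [] := by
  rcases T with ⟨_ | ⟨c, cs⟩⟩ <;> simp [edges_node]

theorem isLeafInd_le_one (T : PlaneTree) : T.isLeafInd ≤ 1 := by
  rcases T with ⟨_ | ⟨c, cs⟩⟩ <;> simp [isLeafInd]

theorem isLeafInd_eq_zero {T : PlaneTree} (h : T ≠ node []) : T.isLeafInd = 0 := by
  rcases T with ⟨_ | ⟨c, cs⟩⟩ <;> simp_all [isLeafInd]

def appendChild : PlaneTree → PlaneTree → PlaneTree
  | node ts, d => node (ts ++ [d])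

theorem appendChild_inj {T T' d d' : PlaneTree} :
    T.appendChild d = T'.appendChild d' ↔ T = T' ∧ d = d' := by
  rcases T with ⟨ts⟩; rcases T' with ⟨ts'⟩
  simp [appendChild]

theorem exists_eq_appendChild {T : PlaneTree} (h : T ≠ node []) :
    ∃ T' d : PlaneTree, T'.appendChild d = T := by
  rcases T with ⟨ts⟩
  rcases List.eq_nil_or_concat ts with rfl | ⟨ts', d, rfl⟩
  · exact absurd rfl h
  · exact ⟨node ts', d, by simp [appendChild, List.concat_eq_append]⟩

theorem edges_appendChild (T d : PlaneTree) :
    (T.appendChild d).edges = T.edges + d.edges + 1 := by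
  rcases T with ⟨ts⟩
  simp only [appendChild, edges_node, List.map_append, List.sum_append, List.map_cons,
    List.map_nil, List.sum_cons, List.sum_nil]
  omega

theorem oldLeaves_appendChild (T d : PlaneTree) :
    (T.appendChild d).oldLeaves =
      T.oldLeaves + d.oldLeaves + if T.edges = 0 then d.isLeafInd else 0 := by
  rcases T with ⟨_ | ⟨c, cs⟩⟩ <;>
    simp [appendChild, oldLeaves_node_cons, edges_node, add_comm, add_left_comm, add_assoc]

theorem youngLeaves_appendChild (T d : PlaneTree) :
    (T.appendChild d).youngLeaves =
      T.youngLeaves + d.youngLeaves + if T.edges = 0 then 0 else d.isLeafInd := by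
  rcases T with ⟨_ | ⟨c, cs⟩⟩ <;>
    simp [appendChild, youngLeaves_node_cons, edges_node, add_comm, add_left_comm, add_assoc]

@[elab_as_elim]
theorem appendChild_induction {P : PlaneTree → Prop} (nil : P (node []))
    (append : ∀ T d, P T → P d → P (T.appendChild d)) (T : PlaneTree) : P T := by
  induction hn : T.edges using Nat.strong_induction_on generalizing T with
  | _ n ih =>
    rcases eq_or_ne T (node []) with rfl | hT
    · exact nil
    obtain ⟨T', d, rfl⟩ := exists_eq_appendChild hT
    rw [edges_appendChild] at hn
    exact append T' d (ih _ (by omega) T' rfl) (ih _ (by omega) d rfl)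

theorem oldLeaves_add_youngLeaves_le_edges (T : PlaneTree) :
    T.oldLeaves + T.youngLeaves ≤ T.edges := by
  induction T using appendChild_induction with
  | nil => simp [edges_node]
  | append T d hT hd =>
    rw [oldLeaves_appendChild, youngLeaves_appendChild, edges_appendChild]
    have := isLeafInd_le_one d
    split_ifs <;> omega

theorem edges_eq_succ_iff {T : PlaneTree} {n : ℕ} :
    T.edges = n + 1 ↔
      ∃ p ∈ antidiagonal n, ∃ T' d : PlaneTree,
        T'.edges = p.1 ∧ d.edges = p.2 ∧ T'.appendChild d = T := by
  constructor
  · intro hT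
    have hne : T ≠ node [] := edges_eq_zero_iff.not.mp (by simp [hT])
    obtain ⟨T', d, rfl⟩ := exists_eq_appendChild hne
    rw [edges_appendChild] at hT
    exact ⟨(T'.edges, d.edges), mem_antidiagonal.mpr (by omega), T', d, rfl, rfl, rfl⟩
  · rintro ⟨p, hp, T', d, hT', hd, rfl⟩
    rw [edges_appendChild, hT', hd, ← mem_antidiagonal.mp hp]

theorem finite_setOf_edges_eq (n : ℕ) : {T : PlaneTree | T.edges = n}.Finite := by
  induction n using Nat.strong_induction_on with
  | _ n ih =>
    rcases n with _ | n
    · simp [edges_eq_zero_iff]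
    refine ((antidiagonal n).finite_toSet.biUnion fun p hp =>
      (ih p.1 (Nat.antidiagonal.fst_lt hp)).image2 appendChild
        (ih p.2 (Nat.antidiagonal.snd_lt hp))).subset fun T hT => ?_
    obtain ⟨p, hp, T', d, hT', hd, rfl⟩ := edges_eq_succ_iff.mp hT
    exact Set.mem_biUnion hp ⟨T', hT', d, hd, rfl⟩

noncomputable def withEdges (n : ℕ) : Finset PlaneTree :=
  (finite_setOf_edges_eq n).toFinset

@[simp]
theorem mem_withEdges {T : PlaneTree} {n : ℕ} : T ∈ withEdges n ↔ T.edges = n :=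
  Set.Finite.mem_toFinset _

theorem withEdges_zero : withEdges 0 = {node []} := by
  ext T
  simp [edges_eq_zero_iff]

theorem sum_withEdges_succ {M : Type*} [AddCommMonoid M] (f : PlaneTree → M) (n : ℕ) :
    ∑ T ∈ withEdges (n + 1), f T =
      ∑ p ∈ antidiagonal n, ∑ T ∈ withEdges p.1, ∑ d ∈ withEdges p.2,
        f (T.appendChild d) := by
  simp_rw [← sum_product', sum_sigma']
  symm
  refine sum_bij (fun x _ => x.2.1.appendChild x.2.2) ?_ ?_ ?_ (fun _ _ => rfl)
  · rintro ⟨p, T, d⟩ hx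
    simp only [mem_sigma, mem_product, mem_withEdges] at hx
    exact mem_withEdges.mpr (edges_eq_succ_iff.mpr ⟨p, hx.1, T, d, hx.2.1, hx.2.2, rfl⟩)
  · rintro ⟨p, T, d⟩ hx ⟨q, T', d'⟩ hy h
    simp only [mem_sigma, mem_product, mem_withEdges] at hx hy
    obtain ⟨rfl, rfl⟩ := appendChild_inj.mp h
    obtain rfl : p = q := Prod.ext (hx.2.1.symm.trans hy.2.1) (hx.2.2.symm.trans hy.2.2)
    rfl
  · intro T hT
    obtain ⟨p, hp, T', d, hT', hd, rfl⟩ := edges_eq_succ_iff.mp (mem_withEdges.mp hT)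
    exact ⟨⟨p, T', d⟩, by simp [hp, hT', hd], rfl⟩

noncomputable def weight (T : PlaneTree) : MvPolynomial (Fin 2) ℚ :=
  X 0 ^ T.oldLeaves * X 1 ^ T.youngLeaves

theorem weight_node_nil : weight (node []) = 1 := by
  simp [weight]

theorem weight_appendChild (T d : PlaneTree) :
    weight (T.appendChild d) =
      weight T * ((if T.edges = 0 then X 0 else X 1) ^ d.isLeafInd * weight d) := by
  rw [weight, weight, weight, oldLeaves_appendChild, youngLeaves_appendChild]
  split_ifs <;> ring

end PlaneTree

open PlaneTree

theorem coeff_treeGF (n : ℕ) : PowerSeries.coeff n treeGF = ∑ T ∈ withEdges n, weight T := by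
  have hmaps : ∀ T ∈ withEdges n,
      (T.oldLeaves, T.youngLeaves) ∈ range (n + 1) ×ˢ range (n + 1) := by
    intro T hT
    have := oldLeaves_add_youngLeaves_le_edges T
    rw [mem_withEdges.mp hT] at this
    simp only [mem_product, mem_range]
    omega
  rw [← sum_fiberwise_of_maps_to hmaps, sum_product, treeGF, PowerSeries.coeff_mk]
  refine sum_congr rfl fun i _ => sum_congr rfl fun j _ => ?_
  have hcard : Nat.card {T : PlaneTree // T.edges = n ∧ T.oldLeaves = i ∧ T.youngLeaves = j} =
      #{T ∈ withEdges n | (T.oldLeaves, T.youngLeaves) = (i, j)} := by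
    rw [← Nat.card_eq_finsetCard]
    exact Nat.card_congr (Equiv.subtypeEquivRight fun T => by simp)
  have hweight : ∀ T ∈ {T ∈ withEdges n | (T.oldLeaves, T.youngLeaves) = (i, j)},
      weight T = X 0 ^ i * X 1 ^ j := by
    intro T hT
    simp only [mem_filter, Prod.mk.injEq] at hT
    rw [weight, hT.2.1, hT.2.2]
  rw [hcard, sum_congr rfl hweight, sum_const, nsmul_eq_mul, mul_assoc]

theorem constantCoeff_treeGF : PowerSeries.constantCoeff treeGF = 1 := by
  rw [← PowerSeries.coeff_zero_eq_constantCoeff_apply, coeff_treeGF, withEdges_zero,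
    sum_singleton, weight_node_nil]

/-- Adding `r - 1` to `G` gives the single-vertex tree the weight `r` instead of `1`. -/
theorem coeff_treeGF_sub_one_add_C (r : MvPolynomial (Fin 2) ℚ) (n : ℕ) :
    PowerSeries.coeff n (treeGF - 1 + PowerSeries.C r) =
      ∑ T ∈ withEdges n, r ^ T.isLeafInd * weight T := by
  rcases n with _ | n
  · simp [constantCoeff_treeGF, withEdges_zero, weight_node_nil, isLeafInd]
  · have hleaf : ∀ T ∈ withEdges (n + 1), T.isLeafInd = 0 := fun T hT =>
      isLeafInd_eq_zero (edges_eq_zero_iff.not.mp (by simp [mem_withEdges.mp hT]))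
    rw [map_add, map_sub, PowerSeries.coeff_one, if_neg n.succ_ne_zero, PowerSeries.coeff_succ_C,
      sub_zero, add_zero, coeff_treeGF]
    exact sum_congr rfl fun T hT => by rw [hleaf T hT, pow_zero, one_mul]

theorem coeff_succ_treeGF (n : ℕ) :
    PowerSeries.coeff (n + 1) treeGF =
      ∑ p ∈ antidiagonal n, PowerSeries.coeff p.1 treeGF *
        PowerSeries.coeff p.2 (treeGF - 1 + PowerSeries.C (if p.1 = 0 then X 0 else X 1)) := by
  rw [coeff_treeGF, sum_withEdges_succ]
  refine sum_congr rfl fun p _ => ?_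
  rw [coeff_treeGF, coeff_treeGF_sub_one_add_C, sum_mul_sum]
  refine sum_congr rfl fun T hT => sum_congr rfl fun d _ => ?_
  rw [weight_appendChild, mem_withEdges.mp hT]

theorem treeGF_eq_one_add_X_mul :
    treeGF = 1 + PowerSeries.X * (treeGF - 1 + PowerSeries.C (X 0) +
      (treeGF - 1) * (treeGF - 1 + PowerSeries.C (X 1))) := by
  refine PowerSeries.ext fun n => ?_
  rcases n with _ | n
  · simp [constantCoeff_treeGF]
  rw [coeff_succ_treeGF, map_add, PowerSeries.coeff_one, if_neg n.succ_ne_zero, zero_add,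
    PowerSeries.coeff_succ_X_mul, ← one_mul (treeGF - 1 + PowerSeries.C (X 0)), map_add,
    PowerSeries.coeff_mul, PowerSeries.coeff_mul, ← sum_add_distrib]
  refine sum_congr rfl fun ⟨i, j⟩ _ => ?_
  rcases eq_or_ne i 0 with rfl | hi
  · simp [constantCoeff_treeGF]
  · simp [hi, PowerSeries.coeff_one]

/-- The square root is the power series `S` with constant term `1` whose square is the radicand,
and the division by `2z` is cleared. -/
theorem treeGF_closed_form :
    letI t : PowerSeries (MvPolynomial (Fin 2) ℚ) := PowerSeries.C (X 0)
    letI s : PowerSeries (MvPolynomial (Fin 2) ℚ) := PowerSeries.C (X 1)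
    letI z : PowerSeries (MvPolynomial (Fin 2) ℚ) := PowerSeries.X
    ∃ S : PowerSeries (MvPolynomial (Fin 2) ℚ),
      S ^ 2 = 1 - 2 * (1 + s) * z + (1 - 4 * t + 2 * s + s ^ 2) * z ^ 2 ∧
      PowerSeries.constantCoeff S = 1 ∧
      2 * z * treeGF = 1 + z - s * z - S := by
  refine ⟨1 + PowerSeries.X - PowerSeries.C (X 1) * PowerSeries.X - 2 * PowerSeries.X * treeGF,
    ?_, ?_, by ring⟩
  · linear_combination (-4 * PowerSeries.X) * treeGF_eq_one_add_X_mul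
  · simp
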